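/- arXiv:math/0004092 — 3 statements merged into one kernel-verified Lean document; each statement's English description precedes it below -/
import Mathlib

section
/- In the algebra A(SL_q(2)) (the free algebra on a,b,c,d modulo the relations ab=qba, ac=qca, bd=qdb, bc=cb, cd=qdc, ad-da=(q-q^{-1})bc, ad-qbc=1), for every k ≥ 0 one has a^k d^k = ∏_{j=1}^{k} (1 + q^{2j-1} b c). -/
noncomputable section
open scoped TensorProduct

/-- The free `ℂ`-algebra on four generators `a, b, c, d`. -/
abbrev FreeSL : Type := FreeAlgebra ℂ (Fin 4)

def Fa : FreeSL := FreeAlgebra.ι ℂ 0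
def Fb : FreeSL := FreeAlgebra.ι ℂ 1
def Fc : FreeSL := FreeAlgebra.ι ℂ 2
def Fd : FreeSL := FreeAlgebra.ι ℂ 3

/-- The defining relations of `A(SL_q(2))`. -/
inductive SLqRel (q : ℂ) : FreeSL → FreeSL → Prop
  | ab : SLqRel q (Fa * Fb) (q • (Fb * Fa))
  | ac : SLqRel q (Fa * Fc) (q • (Fc * Fa))
  | bd : SLqRel q (Fb * Fd) (q • (Fd * Fb))
  | bc : SLqRel q (Fb * Fc) (Fc * Fb)
  | cd : SLqRel q (Fc * Fd) (q • (Fd * Fc))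
  | ad : SLqRel q (Fa * Fd - Fd * Fa) ((q - q⁻¹) • (Fb * Fc))
  | det : SLqRel q (Fa * Fd - q • (Fb * Fc)) 1

/-- The quantum coordinate algebra `A(SL_q(2))`. -/
abbrev ASLq (q : ℂ) : Type := RingQuot (SLqRel q)

def aq (q : ℂ) : ASLq q := RingQuot.mkAlgHom ℂ (SLqRel q) Fa
def bq (q : ℂ) : ASLq q := RingQuot.mkAlgHom ℂ (SLqRel q) Fb
def cq (q : ℂ) : ASLq q := RingQuot.mkAlgHom ℂ (SLqRel q) Fc
def dq (q : ℂ) : ASLq q := RingQuot.mkAlgHom ℂ (SLqRel q) Fd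

/-- The coefficients `p_{k,j}(q)`. -/
def pcoef (q : ℂ) (k j : ℕ) : ℂ :=
  q ^ (j ^ 2) * (∏ r ∈ Finset.Icc (j + 1) k, (q ^ (2 * r) - 1)) /
    (∏ s ∈ Finset.Icc 1 (k - j), (q ^ (2 * s) - 1))

/-!
Writing `z = bc`, the relations `bd = q db` and `cd = q dc` give `z d = q² d z`, and the
determinant relation gives `a d = 1 + q z`. Hence
`a^(n+1) d^(n+1) = a^n (1 + q z) d^n = a^n d^n (1 + q^(2n+1) z)`, and the product formula follows
by induction on `k`.
-/

section QCommute

variable {R A : Type*} [CommSemiring R] [Semiring A] [Algebra R A]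

theorem mul_pow_eq_smul_pow_mul_of_mul_eq_smul {x d : A} {r : R}
    (h : x * d = r • (d * x)) (k : ℕ) : x * d ^ k = r ^ k • (d ^ k * x) := by
  induction k with
  | zero => simp
  | succ n ih =>
    rw [pow_succ, ← mul_assoc, ih, smul_mul_assoc, mul_assoc, h, mul_smul_comm, smul_smul,
      ← mul_assoc, pow_succ]

theorem mul_mul_eq_smul_of_mul_eq_smul {x y d : A} {r s : R}
    (hx : x * d = r • (d * x)) (hy : y * d = s • (d * y)) :
    x * y * d = (r * s) • (d * (x * y)) := by
  rw [mul_assoc, hy, mul_smul_comm, ← mul_assoc, hx, smul_mul_assoc, smul_smul, mul_comm s,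
    mul_assoc]

theorem pow_mul_pow_eq_prod_of_mul_eq_one_add_smul {a d z : A} {q : R}
    (had : a * d = 1 + q • z) (hzd : z * d = q ^ 2 • (d * z)) (k : ℕ) :
    a ^ k * d ^ k = ((List.range k).map fun j => 1 + q ^ (2 * j + 1) • z).prod := by
  induction k with
  | zero => simp
  | succ n ih =>
    have hzdn := mul_pow_eq_smul_pow_mul_of_mul_eq_smul hzd n
    calc a ^ (n + 1) * d ^ (n + 1) = a ^ n * ((a * d) * d ^ n) := by
          rw [pow_succ, pow_succ', mul_assoc, mul_assoc]
      _ = a ^ n * d ^ n * (1 + q ^ (2 * n + 1) • z) := by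
          rw [had, add_mul, one_mul, smul_mul_assoc, hzdn, smul_smul, ← pow_mul, ← pow_succ',
            mul_add, mul_add, mul_one, mul_smul_comm, mul_smul_comm, mul_assoc]
      _ = _ := by rw [ih, List.prod_range_succ]

end QCommute

theorem aq_mul_dq (q : ℂ) : aq q * dq q = 1 + q • (bq q * cq q) := by
  have h := RingQuot.mkAlgHom_rel ℂ (SLqRel.det (q := q))
  simp only [map_sub, map_mul, map_smul, map_one] at h
  exact sub_eq_iff_eq_add.mp h

theorem bq_mul_dq (q : ℂ) : bq q * dq q = q • (dq q * bq q) := by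
  have h := RingQuot.mkAlgHom_rel ℂ (SLqRel.bd (q := q))
  simp only [map_mul, map_smul] at h
  exact h

theorem cq_mul_dq (q : ℂ) : cq q * dq q = q • (dq q * cq q) := by
  have h := RingQuot.mkAlgHom_rel ℂ (SLqRel.cd (q := q))
  simp only [map_mul, map_smul] at h
  exact h

theorem bq_mul_cq_mul_dq (q : ℂ) :
    bq q * cq q * dq q = q ^ 2 • (dq q * (bq q * cq q)) := by
  rw [sq]
  exact mul_mul_eq_smul_of_mul_eq_smul (bq_mul_dq q) (cq_mul_dq q)

theorem stmt0_general (q : ℂ) (k : ℕ) :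
    aq q ^ k * dq q ^ k =
      ((List.range k).map (fun j => 1 + q ^ (2 * (j + 1) - 1) • (bq q * cq q))).prod := by
  have hexp (j : ℕ) : 2 * (j + 1) - 1 = 2 * j + 1 := by omega
  simp only [hexp]
  exact pow_mul_pow_eq_prod_of_mul_eq_one_add_smul (aq_mul_dq q) (bq_mul_cq_mul_dq q) k

/-- In `A(SL_q(2))`, for every `k ≥ 0`,
`a^k d^k = ∏_{j=1}^{k} (1 + q^(2j-1) b c)`. -/
theorem stmt0 (q : ℂ) (hq : q ≠ 0) (k : ℕ) :
    aq q ^ k * dq q ^ k =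
      ((List.range k).map (fun j => 1 + q ^ (2 * (j + 1) - 1) • (bq q * cq q))).prod :=
  stmt0_general q k
end
end

section
/- Let q be a primitive l-th root of unity with l odd. Then in A(SL_q(2)) the elements α = a^l, β = b^l, γ = c^l, δ = d^l pairwise commute. -/
/-!
The relations say that every pair of generators other than `(a, d)` commutes up to a power
of `q`, so their `l`-th powers commute because `q ^ l = 1`. For `a` and `d`, the relation
`d a = a d - (q - q⁻¹) b c` together with `(b c) a = q⁻² a (b c)` gives
`d a^l = a^l d - (1 + q⁻² + ⋯ + q⁻²⁽ˡ⁻¹⁾)(q - q⁻¹) a^(l-1) b c`, and the coefficient vanishes: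
for `l > 1` the element `q⁻²` is again a primitive `l`-th root of unity (as `l` is odd), and
for `l = 1` we have `q = 1`.
-/

noncomputable section
open scoped TensorProduct

def QCommute {R A : Type*} [CommSemiring R] [Semiring A] [Algebra R A] (q : R) (x y : A) :
    Prop :=
  x * y = q • (y * x)

namespace QCommute

variable {R A : Type*} [CommSemiring R] [Semiring A] [Algebra R A] {q r : R} {x y z : A}

theorem pow_left (h : QCommute q x y) (n : ℕ) : QCommute (q ^ n) (x ^ n) y := by
  induction n with
  | zero => simp [QCommute]
  | succ n ih =>
    calc x ^ (n + 1) * y = x ^ n * (x * y) := by rw [pow_succ, mul_assoc]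
      _ = q • ((x ^ n * y) * x) := by rw [h, mul_smul_comm, mul_assoc]
      _ = q ^ (n + 1) • (y * x ^ (n + 1)) := by
          rw [ih, smul_mul_assoc, smul_smul, mul_assoc, ← pow_succ, ← pow_succ']

theorem mul_left (hx : QCommute q x z) (hy : QCommute r y z) : QCommute (q * r) (x * y) z := by
  calc x * y * z = r • (x * z * y) := by rw [mul_assoc, hy, mul_smul_comm, mul_assoc]
    _ = (q * r) • (z * (x * y)) := by rw [hx, smul_mul_assoc, smul_smul, mul_comm r, mul_assoc]

theorem commute_pow_pow {l : ℕ} (h : QCommute q x y) (hq : q ^ l = 1) :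
    Commute (x ^ l) (y ^ l) := by
  have hxl : x ^ l * y = y * x ^ l := by
    simpa only [QCommute, hq, one_smul] using h.pow_left l
  exact Commute.pow_right hxl l

end QCommute

theorem QCommute.symm {K A : Type*} [Field K] [Semiring A] [Algebra K A] {q : K} {x y : A}
    (h : QCommute q x y) (hq : q ≠ 0) : QCommute q⁻¹ y x := by
  rw [QCommute, h, smul_smul, inv_mul_cancel₀ hq, one_smul]

theorem mul_pow_succ_of_mul_eq_add_smul {R A : Type*} [CommSemiring R] [Semiring A]
    [Algebra R A] {μ w : R} {a d t : A} (hda : d * a = a * d + μ • t) (hta : QCommute w t a)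
    (n : ℕ) :
    d * a ^ (n + 1) =
      a ^ (n + 1) * d + ((∑ i ∈ Finset.range (n + 1), w ^ i) * μ) • (a ^ n * t) := by
  induction n with
  | zero => simpa using hda
  | succ n ih =>
    rw [pow_succ a (n + 1), ← mul_assoc, ih, add_mul, smul_mul_assoc, mul_assoc, mul_assoc, hda,
      hta, mul_add, ← mul_assoc, ← pow_succ, mul_smul_comm, mul_smul_comm, smul_smul,
      ← mul_assoc, ← pow_succ, geom_sum_succ (x := w) (n := n + 1), add_assoc, ← add_smul]
    congr 2
    ring

theorem IsPrimitiveRoot.geom_sum_inv_sq_mul_sub_inv_eq_zero {K : Type*} [Field K] {q : K}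
    {l : ℕ} (hq : IsPrimitiveRoot q l) (hl : Odd l) :
    (∑ i ∈ Finset.range l, (q⁻¹ ^ 2) ^ i) * (q⁻¹ - q) = 0 := by
  rcases (Nat.one_le_iff_ne_zero.mpr hl.pos.ne').eq_or_lt with rfl | hl1
  · simp [IsPrimitiveRoot.one_right_iff.mp hq]
  · have hw : IsPrimitiveRoot (q⁻¹ ^ 2) l :=
      hq.inv.pow_of_coprime 2 (Nat.coprime_two_left.mpr hl)
    rw [hw.geom_sum_eq_zero hl1, zero_mul]

section Relations

variable (q : ℂ)

theorem qCommute_aq_bq : QCommute q (aq q) (bq q) := by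
  simpa only [QCommute, aq, bq, map_mul, map_smul] using
    RingQuot.mkAlgHom_rel ℂ (SLqRel.ab (q := q))

theorem qCommute_aq_cq : QCommute q (aq q) (cq q) := by
  simpa only [QCommute, aq, cq, map_mul, map_smul] using
    RingQuot.mkAlgHom_rel ℂ (SLqRel.ac (q := q))

theorem qCommute_bq_dq : QCommute q (bq q) (dq q) := by
  simpa only [QCommute, bq, dq, map_mul, map_smul] using
    RingQuot.mkAlgHom_rel ℂ (SLqRel.bd (q := q))

theorem qCommute_cq_dq : QCommute q (cq q) (dq q) := by
  simpa only [QCommute, cq, dq, map_mul, map_smul] using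
    RingQuot.mkAlgHom_rel ℂ (SLqRel.cd (q := q))

theorem commute_bq_cq : Commute (bq q) (cq q) := by
  simpa only [Commute, SemiconjBy, bq, cq, map_mul] using
    RingQuot.mkAlgHom_rel ℂ (SLqRel.bc (q := q))

theorem dq_mul_aq : dq q * aq q = aq q * dq q + (q⁻¹ - q) • (bq q * cq q) := by
  have had : aq q * dq q - dq q * aq q = (q - q⁻¹) • (bq q * cq q) := by
    simpa only [aq, bq, cq, dq, map_sub, map_mul, map_smul] using
      RingQuot.mkAlgHom_rel ℂ (SLqRel.ad (q := q))
  calc dq q * aq q = aq q * dq q - (aq q * dq q - dq q * aq q) := by abel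
    _ = aq q * dq q + (q⁻¹ - q) • (bq q * cq q) := by rw [had]; module

end Relations

theorem commute_aq_pow_dq_pow {q : ℂ} {l : ℕ} (hq : IsPrimitiveRoot q l) (hl : Odd l) :
    Commute (aq q ^ l) (dq q ^ l) := by
  have hq0 : q ≠ 0 := hq.ne_zero hl.pos.ne'
  have hbca : QCommute (q⁻¹ ^ 2) (bq q * cq q) (aq q) := by
    rw [sq]
    exact ((qCommute_aq_bq q).symm hq0).mul_left ((qCommute_aq_cq q).symm hq0)
  obtain ⟨n, rfl⟩ : ∃ n, l = n + 1 := Nat.exists_eq_succ_of_ne_zero hl.pos.ne'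
  have hcomm := mul_pow_succ_of_mul_eq_add_smul (dq_mul_aq q) hbca n
  rw [hq.geom_sum_inv_sq_mul_sub_inv_eq_zero hl, zero_smul, add_zero] at hcomm
  exact (Commute.symm hcomm).pow_right (n + 1)

/-- For `q` a primitive `l`-th root of unity, `l` odd, the elements
`a^l, b^l, c^l, d^l` pairwise commute in `A(SL_q(2))`. -/
theorem stmt3 (q : ℂ) (l : ℕ) (hq : IsPrimitiveRoot q l) (hl : Odd l) :
    ∀ x ∈ ({aq q, bq q, cq q, dq q} : Set (ASLq q)),
      ∀ y ∈ ({aq q, bq q, cq q, dq q} : Set (ASLq q)),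
        Commute (x ^ l) (y ^ l) := by
  have hql : q ^ l = 1 := hq.pow_eq_one
  have hab := (qCommute_aq_bq q).commute_pow_pow hql
  have hac := (qCommute_aq_cq q).commute_pow_pow hql
  have hbd := (qCommute_bq_dq q).commute_pow_pow hql
  have hcd := (qCommute_cq_dq q).commute_pow_pow hql
  have hbc := (commute_bq_cq q).pow_pow l l
  have had := commute_aq_pow_dq_pow hq hl
  intro x hx y hy
  simp only [Set.mem_insert_iff, Set.mem_singleton_iff] at hx hy
  rcases hx with rfl | rfl | rfl | rfl <;> rcases hy with rfl | rfl | rfl | rfl <;>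
    first | exact Commute.refl _ | assumption | exact Commute.symm ‹_›
end
end

section
/- Let q be a primitive l-th root of unity with l odd. Then in A(SL_q(2)) the elements α = a^l, β = b^l, γ = c^l, δ = d^l are central: they commute with each of a, b, c, d. -/
noncomputable section
open scoped TensorProduct

/-!
For the skew-commuting pairs, `x * y = q^{±1} • (y * x)` gives `x ^ l * y = q^{±l} • (y * x ^ l)`,
and `q ^ l = 1`. The only other pair is `a, d`: from `a * d = d * a + (q - q⁻¹) • b c` and
`a * (b c) = q² • (b c * a)` one gets
`a ^ l * d = d * a ^ l + (q - q⁻¹) (1 + q² + ⋯ + q^{2(l-1)}) • (b c * a ^ (l - 1))`.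
The geometric sum vanishes because `q²` is an `l`-th root of unity, unless `q² = 1`; as `l` is odd,
that forces `q = 1`, and then `q - q⁻¹ = 0`. The pair `d, a` is the same with `q⁻¹` in place of `q`.
-/

open Finset

section SkewCommute

variable {R A : Type*} [CommSemiring R] [Semiring A] [Algebra R A] {x y e : A} {s t u : R}

theorem pow_mul_eq_smul_mul_pow (h : x * y = s • (y * x)) (n : ℕ) :
    x ^ n * y = s ^ n • (y * x ^ n) := by
  induction n with
  | zero => simp
  | succ n ih =>
    rw [pow_succ, mul_assoc, h, mul_smul_comm, ← mul_assoc, ih, smul_mul_assoc, mul_assoc,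
      ← pow_succ, smul_smul, ← pow_succ']

theorem mul_pow_eq_smul_pow_mul (h : x * y = s • (y * x)) (n : ℕ) :
    x * y ^ n = s ^ n • (y ^ n * x) := by
  induction n with
  | zero => simp
  | succ n ih =>
    rw [pow_succ, ← mul_assoc, ih, smul_mul_assoc, mul_assoc, h, mul_smul_comm, ← mul_assoc,
      ← pow_succ, smul_smul, ← pow_succ]

theorem commute_pow_left_of_mul_eq_smul {n : ℕ} (h : x * y = s • (y * x)) (hs : s ^ n = 1) :
    Commute (x ^ n) y := by
  rw [Commute, SemiconjBy, pow_mul_eq_smul_mul_pow h, hs, one_smul]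

theorem commute_pow_right_of_mul_eq_smul {n : ℕ} (h : x * y = s • (y * x)) (hs : s ^ n = 1) :
    Commute (y ^ n) x := by
  rw [Commute, SemiconjBy, mul_pow_eq_smul_pow_mul h, hs, one_smul]

theorem pow_succ_mul_eq_add_smul (h : x * y = y * x + t • e) (he : x * e = u • (e * x)) (n : ℕ) :
    x ^ (n + 1) * y = y * x ^ (n + 1) + (t * ∑ i ∈ range (n + 1), u ^ i) • (e * x ^ n) := by
  induction n with
  | zero => simpa using h
  | succ n ih =>
    rw [pow_succ, mul_assoc, h, mul_add, ← mul_assoc, ih, mul_smul_comm,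
      pow_mul_eq_smul_mul_pow he, add_mul, smul_mul_assoc, mul_assoc, ← pow_succ, mul_assoc,
      ← pow_succ, add_assoc, smul_smul, ← add_smul, sum_range_succ _ (n + 1), mul_add,
      mul_comm t (u ^ (n + 1))]

theorem commute_pow_of_mul_eq_add_smul {n : ℕ} (h : x * y = y * x + t • e)
    (he : x * e = u • (e * x)) (hsum : t * ∑ i ∈ range n, u ^ i = 0) : Commute (x ^ n) y := by
  cases n with
  | zero => rw [pow_zero]; exact Commute.one_left y
  | succ n =>
    rw [Commute, SemiconjBy, pow_succ_mul_eq_add_smul h he, hsum, zero_smul, add_zero]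

end SkewCommute

namespace IsPrimitiveRoot

variable {K : Type*} [Field K] {q : K} {l : ℕ}

theorem eq_one_of_sq_eq_one (hq : IsPrimitiveRoot q l) (hl : Odd l) (h : q ^ 2 = 1) : q = 1 := by
  obtain rfl : l = 1 := by
    rcases (Nat.dvd_prime Nat.prime_two).1 (hq.dvd_of_pow_eq_one 2 h) with h1 | rfl
    · exact h1
    · exact absurd hl (by decide)
  exact one_right_iff.1 hq

theorem sub_inv_mul_geom_sum_sq_eq_zero (hq : IsPrimitiveRoot q l) (hl : Odd l) :
    (q - q⁻¹) * ∑ i ∈ range l, (q ^ 2) ^ i = 0 := by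
  rcases eq_or_ne (q ^ 2) 1 with hq2 | hq2
  · rw [hq.eq_one_of_sq_eq_one hl hq2, inv_one, sub_self, zero_mul]
  · rw [geom_sum_eq hq2, pow_right_comm, hq.pow_eq_one, one_pow, sub_self, zero_div, mul_zero]

end IsPrimitiveRoot

namespace ASLq

variable (q : ℂ)

theorem aq_mul_bq : aq q * bq q = q • (bq q * aq q) := by
  simpa [aq, bq] using RingQuot.mkAlgHom_rel ℂ (SLqRel.ab (q := q))

theorem aq_mul_cq : aq q * cq q = q • (cq q * aq q) := by
  simpa [aq, cq] using RingQuot.mkAlgHom_rel ℂ (SLqRel.ac (q := q))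

theorem bq_mul_dq : bq q * dq q = q • (dq q * bq q) := by
  simpa [bq, dq] using RingQuot.mkAlgHom_rel ℂ (SLqRel.bd (q := q))

theorem bq_mul_cq : bq q * cq q = cq q * bq q := by
  simpa [bq, cq] using RingQuot.mkAlgHom_rel ℂ (SLqRel.bc (q := q))

theorem cq_mul_dq : cq q * dq q = q • (dq q * cq q) := by
  simpa [cq, dq] using RingQuot.mkAlgHom_rel ℂ (SLqRel.cd (q := q))

theorem aq_mul_dq : aq q * dq q = dq q * aq q + (q - q⁻¹) • (bq q * cq q) := by
  rw [← sub_eq_iff_eq_add']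
  simpa [aq, bq, cq, dq] using RingQuot.mkAlgHom_rel ℂ (SLqRel.ad (q := q))

theorem dq_mul_aq : dq q * aq q = aq q * dq q + (q⁻¹ - q⁻¹⁻¹) • (bq q * cq q) := by
  rw [aq_mul_dq, inv_inv, add_assoc, ← add_smul, sub_add_sub_cancel, sub_self, zero_smul,
    add_zero]

theorem aq_mul_bq_mul_cq : aq q * (bq q * cq q) = q ^ 2 • (bq q * cq q * aq q) := by
  rw [← mul_assoc, aq_mul_bq, smul_mul_assoc, mul_assoc, aq_mul_cq, mul_smul_comm, smul_smul,
    ← mul_assoc, sq]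

variable {q} {l : ℕ}

theorem dq_mul_bq_mul_cq (hq : q ≠ 0) :
    dq q * (bq q * cq q) = q⁻¹ ^ 2 • (bq q * cq q * dq q) := by
  have hdb : dq q * bq q = q⁻¹ • (bq q * dq q) := by
    rw [bq_mul_dq, smul_smul, inv_mul_cancel₀ hq, one_smul]
  have hdc : dq q * cq q = q⁻¹ • (cq q * dq q) := by
    rw [cq_mul_dq, smul_smul, inv_mul_cancel₀ hq, one_smul]
  rw [← mul_assoc, hdb, smul_mul_assoc, mul_assoc, hdc, mul_smul_comm, smul_smul, ← mul_assoc,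
    sq]

theorem commute_aq_pow (hq : IsPrimitiveRoot q l) (hl : Odd l) {y : ASLq q}
    (hy : y ∈ ({aq q, bq q, cq q, dq q} : Set (ASLq q))) : Commute (aq q ^ l) y := by
  rcases hy with rfl | rfl | rfl | rfl
  · exact (Commute.refl _).pow_left l
  · exact commute_pow_left_of_mul_eq_smul (aq_mul_bq q) hq.pow_eq_one
  · exact commute_pow_left_of_mul_eq_smul (aq_mul_cq q) hq.pow_eq_one
  · exact commute_pow_of_mul_eq_add_smul (aq_mul_dq q) (aq_mul_bq_mul_cq q)
      (hq.sub_inv_mul_geom_sum_sq_eq_zero hl)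

theorem commute_bq_pow (hq : q ^ l = 1) {y : ASLq q}
    (hy : y ∈ ({aq q, bq q, cq q, dq q} : Set (ASLq q))) : Commute (bq q ^ l) y := by
  rcases hy with rfl | rfl | rfl | rfl
  · exact commute_pow_right_of_mul_eq_smul (aq_mul_bq q) hq
  · exact (Commute.refl _).pow_left l
  · exact Commute.pow_left (bq_mul_cq q) l
  · exact commute_pow_left_of_mul_eq_smul (bq_mul_dq q) hq

theorem commute_cq_pow (hq : q ^ l = 1) {y : ASLq q}
    (hy : y ∈ ({aq q, bq q, cq q, dq q} : Set (ASLq q))) : Commute (cq q ^ l) y := by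
  rcases hy with rfl | rfl | rfl | rfl
  · exact commute_pow_right_of_mul_eq_smul (aq_mul_cq q) hq
  · exact Commute.pow_left (bq_mul_cq q).symm l
  · exact (Commute.refl _).pow_left l
  · exact commute_pow_left_of_mul_eq_smul (cq_mul_dq q) hq

theorem commute_dq_pow (hq : IsPrimitiveRoot q l) (hl : Odd l) {y : ASLq q}
    (hy : y ∈ ({aq q, bq q, cq q, dq q} : Set (ASLq q))) : Commute (dq q ^ l) y := by
  rcases hy with rfl | rfl | rfl | rfl
  · exact commute_pow_of_mul_eq_add_smul (dq_mul_aq q) (dq_mul_bq_mul_cq (hq.ne_zero hl.pos.ne'))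
      (hq.inv.sub_inv_mul_geom_sum_sq_eq_zero hl)
  · exact commute_pow_right_of_mul_eq_smul (bq_mul_dq q) hq.pow_eq_one
  · exact commute_pow_right_of_mul_eq_smul (cq_mul_dq q) hq.pow_eq_one
  · exact (Commute.refl _).pow_left l

end ASLq

/-- For `q` a primitive `l`-th root of unity, `l` odd, the elements
`a^l, b^l, c^l, d^l` are central: they commute with each of `a, b, c, d`. -/
theorem stmt4 (q : ℂ) (l : ℕ) (hq : IsPrimitiveRoot q l) (hl : Odd l) :
    ∀ x ∈ ({aq q, bq q, cq q, dq q} : Set (ASLq q)),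
      ∀ y ∈ ({aq q, bq q, cq q, dq q} : Set (ASLq q)),
        Commute (x ^ l) y := by
  rintro x (rfl | rfl | rfl | rfl) y hy
  · exact ASLq.commute_aq_pow hq hl hy
  · exact ASLq.commute_bq_pow hq.pow_eq_one hy
  · exact ASLq.commute_cq_pow hq.pow_eq_one hy
  · exact ASLq.commute_dq_pow hq hl hy
end
end
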